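/- For the two-qubit separable state ς = (1/2)(|00⟩⟨00| + |1+⟩⟨1+|) with |+⟩ = (|0⟩+|1⟩)/√2: (a) ς has no product eigenbasis; (b) M^A(ς) = 0; (c) the eigenvalues of Tr_A ς are (2±√2)/4; (d) M^B(ς) = −((2−√2)/4 − 0)log₂((2−√2)/4) − |(2+√2)/4 − 1| log₂((2+√2)/4), so M(ς) = M^B(ς)/2 > 0. -/

import Mathlib

open Matrix Kronecker Finset
open scoped ComplexOrder

attribute [local instance] Classical.propDecidable

noncomputable section

/-- nearest integer multiple of `y` to `x`, ties broken downward; `0` if `y = 0`. -/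
def nim (y x : ℝ) : ℝ :=
  if y = 0 then 0
  else if x - y * ⌊x / y⌋ ≤ y * ⌈x / y⌉ - x then y * ⌊x / y⌋ else y * ⌈x / y⌉

/-- partial trace over the second (B) factor -/
def ptraceB {α β : Type*} [Fintype α] [Fintype β]
    (ρ : Matrix (α × β) (α × β) ℂ) : Matrix α α ℂ :=
  fun a a' => ∑ b : β, ρ (a, b) (a', b)

/-- partial trace over the first (A) factor -/
def ptraceA {α β : Type*} [Fintype α] [Fintype β]
    (ρ : Matrix (α × β) (α × β) ℂ) : Matrix β β ℂ :=
  fun b b' => ∑ a : α, ρ (a, b) (a, b')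

/-- the (real) eigenvalues of a Hermitian matrix, junk value `0` otherwise -/
def evalsR {n : Type*} [Fintype n] [DecidableEq n] (A : Matrix n n ℂ) : n → ℝ :=
  if h : A.IsHermitian then h.eigenvalues else 0

/-- orthogonal projection onto the η-eigenspace of a Hermitian matrix -/
def eigProj {n : Type*} [Fintype n] [DecidableEq n] (ρ : Matrix n n ℂ) (η : ℝ) :
    Matrix n n ℂ :=
  if h : ρ.IsHermitian then
    ∑ k ∈ univ.filter (fun k => h.eigenvalues k = η),
      vecMulVec (fun i => h.eigenvectorBasis k i) (star fun i => h.eigenvectorBasis k i)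
  else 0

/-- truncation of ρ down to the η-eigenspace: `η • P_η` -/
def trunc {n : Type*} [Fintype n] [DecidableEq n] (ρ : Matrix n n ℂ) (η : ℝ) :
    Matrix n n ℂ := (η : ℂ) • eigProj ρ η

/-- dimension of the η-eigenspace -/
def dimEig {n : Type*} [Fintype n] [DecidableEq n] (ρ : Matrix n n ℂ) (η : ℝ) : ℕ :=
  if h : ρ.IsHermitian then (univ.filter (fun k => h.eigenvalues k = η)).card else 0

/-- a single term of the measure `M` -/
def Mterm (η T lam : ℝ) : ℝ := -(|lam - nim η lam| * Real.logb 2 (lam / T))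

/-- the measure `M` seen from side A -/
def MmeasA {α β : Type*} [Fintype α] [Fintype β] [DecidableEq α] [DecidableEq β]
    (ρ : Matrix (α × β) (α × β) ℂ) : ℝ :=
  ∑ η ∈ Finset.image (evalsR ρ) univ, ∑ i : α,
    Mterm η (η * (dimEig ρ η : ℝ)) (evalsR (ptraceB (trunc ρ η)) i)

/-- the measure `M` seen from side B -/
def MmeasB {α β : Type*} [Fintype α] [Fintype β] [DecidableEq α] [DecidableEq β]
    (ρ : Matrix (α × β) (α × β) ℂ) : ℝ :=
  ∑ η ∈ Finset.image (evalsR ρ) univ, ∑ i : β,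
    Mterm η (η * (dimEig ρ η : ℝ)) (evalsR (ptraceA (trunc ρ η)) i)

/-- the measure `M` of nonclassical correlation -/
def Mmeas {α β : Type*} [Fintype α] [Fintype β] [DecidableEq α] [DecidableEq β]
    (ρ : Matrix (α × β) (α × β) ℂ) : ℝ := (MmeasA ρ + MmeasB ρ) / 2

def IsDensityMatrix {n : Type*} [Fintype n] [DecidableEq n] (ρ : Matrix n n ℂ) : Prop :=
  ρ.PosSemidef ∧ ρ.trace = 1

/-- ρ admits an eigenbasis consisting of product vectors -/
def HasProductEigenbasis {α β : Type*} [Fintype α] [Fintype β] [DecidableEq α] [DecidableEq β]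
    (ρ : Matrix (α × β) (α × β) ℂ) : Prop :=
  ∃ (a : α → α → ℂ) (b : β → β → ℂ) (e : α → β → ℝ),
    (∀ j j', ∑ i, star (a j i) * a j' i = if j = j' then 1 else 0) ∧
    (∀ k k', ∑ i, star (b k i) * b k' i = if k = k' then 1 else 0) ∧
    ρ = ∑ j : α, ∑ k : β,
      (e j k : ℂ) • (vecMulVec (a j) (star (a j)) ⊗ₖ vecMulVec (b k) (star (b k)))


def ket00 : Fin 2 × Fin 2 → ℂ := fun p => if p = (0, 0) then 1 else 0
def ket01 : Fin 2 × Fin 2 → ℂ := fun p => if p = (0, 1) then 1 else 0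
def ket10 : Fin 2 × Fin 2 → ℂ := fun p => if p = (1, 0) then 1 else 0
/-- `|1+⟩ = |1⟩ ⊗ (|0⟩ + |1⟩)/√2` -/
def ket1p : Fin 2 × Fin 2 → ℂ := fun p => if p.1 = 1 then ((1 / Real.sqrt 2 : ℝ) : ℂ) else 0
/-- `|φ⟩ = (|00⟩ + |11⟩)/√2` -/
def ketBell : Fin 2 × Fin 2 → ℂ := fun p => if p.1 = p.2 then ((1 / Real.sqrt 2 : ℝ) : ℂ) else 0

/-- `ς = (1/2)(|00⟩⟨00| + |1+⟩⟨1+|)` -/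
def varsigmaState : Matrix (Fin 2 × Fin 2) (Fin 2 × Fin 2) ℂ :=
  ((1 / 2 : ℝ) : ℂ) • (vecMulVec ket00 (star ket00) + vecMulVec ket1p (star ket1p))

/-!
`ς = P / 2` for the rank-two projector `P` onto `span {|00⟩, |1+⟩}`, so `ς² = ς / 2` and
`Tr ς = 1`: the spectrum of `ς` is `{0, 1/2}`, with `1/2` twice, the truncation of `ς` at `1/2`
is `ς` itself, and the `η = 0` terms of `M` vanish. So `M^A` and `M^B` only see the spectra of
the reduced states. `Tr_B ς = I / 2` is an integer multiple of `1/2`, so it contributes nothing,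
while `Tr_A ς = [[3/4, 1/4], [1/4, 1/4]]` has characteristic polynomial `λ² - λ + 1/8`, whose
roots `(2 ± √2)/4` lie strictly between multiples of `1/2`.

If there were a product eigenbasis `a_j ⊗ b_k` with eigenvalues `e_jk ∈ {0, 1/2}`, each `b_k`
would be an eigenvector of `Tr_A ς` with eigenvalue `∑_j e_jk ∈ {0, 1/2, 1}`, which is not a
root of that polynomial.
-/

theorem mul_fst_snd_ne_zero {α β R : Type*} [MulZeroClass R] [NoZeroDivisors R] {x : α → R}
    {y : β → R} (hx : x ≠ 0) (hy : y ≠ 0) : (fun p : α × β => x p.1 * y p.2) ≠ 0 := by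
  obtain ⟨i, hi⟩ := Function.ne_iff.mp hx
  obtain ⟨i', hi'⟩ := Function.ne_iff.mp hy
  exact Function.ne_iff.mpr ⟨(i, i'), mul_ne_zero hi hi'⟩

namespace Matrix

section Eigen
variable {K n : Type*} [Field K] [Fintype n] {A : Matrix n n K} {v : n → K} {μ : K}

theorem mem_spectrum_of_mulVec_eq_smul [DecidableEq n] (hv : v ≠ 0) (hAv : A *ᵥ v = μ • v) :
    μ ∈ spectrum K A :=
  spectrum_toLin' A ▸ (Module.End.hasEigenvalue_of_hasEigenvector
    ⟨Module.End.mem_eigenspace_iff.mpr hAv, hv⟩).mem_spectrum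

theorem eq_zero_or_eq_of_mul_self_eq_smul {c : K} (hA : A * A = c • A) (hv : v ≠ 0)
    (hAv : A *ᵥ v = μ • v) : μ = 0 ∨ μ = c := by
  have h : (μ * (μ - c)) • v = 0 := by
    rw [mul_sub, sub_smul, sub_eq_zero, mul_smul, mul_smul, ← hAv, ← mulVec_smul, ← hAv,
      mulVec_mulVec, hA, smul_mulVec, hAv, smul_comm]
  rcases mul_eq_zero.mp ((smul_eq_zero.mp h).resolve_right hv) with h0 | h1
  · exact Or.inl h0
  · exact Or.inr (sub_eq_zero.mp h1)

end Eigen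

theorem kronecker_mulVec_mul {α β R : Type*} [Fintype α] [Fintype β] [CommSemiring R]
    (A : Matrix α α R) (B : Matrix β β R) (x : α → R) (y : β → R) :
    (A ⊗ₖ B) *ᵥ (fun p => x p.1 * y p.2) = fun p => (A *ᵥ x) p.1 * (B *ᵥ y) p.2 := by
  ext p
  simp only [mulVec, dotProduct, kroneckerMap_apply, Fintype.sum_prod_type, Finset.sum_mul_sum]
  exact Finset.sum_congr rfl fun _ _ => Finset.sum_congr rfl fun _ _ => by ring

namespace IsHermitian
variable {n : Type*} [Fintype n] [DecidableEq n] {A : Matrix n n ℂ} (hA : A.IsHermitian)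

theorem ofReal_eigenvalues_mem_spectrum (k : n) : (hA.eigenvalues k : ℂ) ∈ spectrum ℂ A :=
  hA.spectrum_eq_image_range ▸ ⟨_, ⟨k, rfl⟩, rfl⟩

theorem eigenvectorBasis_ne_zero (k : n) : ⇑(hA.eigenvectorBasis k) ≠ 0 :=
  (WithLp.ofLp_eq_zero 2).ne.2 (hA.eigenvectorBasis.orthonormal.ne_zero k)

theorem eigenvalues_eq_zero_or_eq {c : ℝ} (h : A * A = (c : ℂ) • A) (k : n) :
    hA.eigenvalues k = 0 ∨ hA.eigenvalues k = c := by
  have := eq_zero_or_eq_of_mul_self_eq_smul h (hA.eigenvectorBasis_ne_zero k)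
    (by rw [hA.mulVec_eigenvectorBasis, ← Complex.coe_smul])
  exact_mod_cast this

theorem eq_sum_eigenvalues_smul_vecMulVec :
    A = ∑ k, (hA.eigenvalues k : ℂ) •
      vecMulVec ⇑(hA.eigenvectorBasis k) (star ⇑(hA.eigenvectorBasis k)) := by
  conv_lhs => rw [hA.spectral_theorem, Unitary.conjStarAlgAut_apply]
  ext i j
  rw [Matrix.mul_apply]
  simp only [Matrix.mul_diagonal, vecMulVec_apply, Matrix.sum_apply, Matrix.smul_apply,
    star_apply, Pi.star_apply, Function.comp_apply, IsHermitian.eigenvectorUnitary_apply,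
    smul_eq_mul, RCLike.ofReal_eq_complex_ofReal]
  exact Finset.sum_congr rfl fun k _ => by ring

end IsHermitian
end Matrix

section Truncation
variable {n : Type*} [Fintype n] [DecidableEq n] {A : Matrix n n ℂ} {η : ℝ}

theorem evalsR_of_isHermitian (hA : A.IsHermitian) : evalsR A = hA.eigenvalues := dif_pos hA

theorem trunc_eq_self (hA : A.IsHermitian)
    (h : ∀ k, hA.eigenvalues k = 0 ∨ hA.eigenvalues k = η) : trunc A η = A := by
  have hsupp : ∀ k ∈ univ, (hA.eigenvalues k : ℂ) •
      vecMulVec ⇑(hA.eigenvectorBasis k) (star ⇑(hA.eigenvectorBasis k)) ≠ 0 →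
      hA.eigenvalues k = η := fun k _ hk =>
    (h k).resolve_left fun h0 => hk (by rw [h0, Complex.ofReal_zero, zero_smul])
  rw [trunc, eigProj, dif_pos hA, Finset.smul_sum]
  conv_rhs => rw [hA.eq_sum_eigenvalues_smul_vecMulVec, ← Finset.sum_filter_of_ne hsupp]
  exact Finset.sum_congr rfl fun k hk => by rw [(mem_filter.mp hk).2]

theorem mul_dimEig_eq_trace (hA : A.IsHermitian)
    (h : ∀ k, hA.eigenvalues k = 0 ∨ hA.eigenvalues k = η) :
    ((η * dimEig A η : ℝ) : ℂ) = A.trace := by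
  have hsupp : ∀ k ∈ univ, hA.eigenvalues k ≠ 0 → hA.eigenvalues k = η :=
    fun k _ => (h k).resolve_left
  have hsum : ∑ k, hA.eigenvalues k = η * #{k | hA.eigenvalues k = η} := by
    rw [← Finset.sum_filter_of_ne hsupp, Finset.sum_congr rfl fun k hk => (mem_filter.mp hk).2,
      Finset.sum_const, nsmul_eq_mul, mul_comm]
  rw [hA.trace_eq_sum_eigenvalues, dimEig, dif_pos hA, ← hsum]
  push_cast
  rfl

theorem sum_image_evalsR_eq (hA : A.IsHermitian)
    (h : ∀ k, hA.eigenvalues k = 0 ∨ hA.eigenvalues k = η) (htr : A.trace = 1)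
    {g : ℝ → ℝ} (hg : g 0 = 0) : ∑ x ∈ image (evalsR A) univ, g x = g η := by
  have hmem : η ∈ image (evalsR A) univ := by
    have hdim : dimEig A η ≠ 0 := by
      intro h0
      have := (mul_dimEig_eq_trace hA h).trans htr
      simp [h0] at this
    rw [dimEig, dif_pos hA, ← Nat.pos_iff_ne_zero, Finset.card_pos] at hdim
    obtain ⟨k, hk⟩ := hdim
    exact mem_image.mpr ⟨k, mem_univ k, by rw [evalsR_of_isHermitian hA, (mem_filter.mp hk).2]⟩
  refine Finset.sum_eq_single_of_mem η hmem fun x hx hxη => ?_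
  obtain ⟨k, -, rfl⟩ := mem_image.mp hx
  rw [evalsR_of_isHermitian hA] at hxη ⊢
  rw [(h k).resolve_right hxη, hg]

theorem evalsR_ofReal_smul_one [Nonempty n] (c : ℝ) (i : n) :
    evalsR ((c : ℂ) • (1 : Matrix n n ℂ)) i = c := by
  have hA : ((c : ℂ) • (1 : Matrix n n ℂ)).IsHermitian :=
    isHermitian_one.smul (Complex.conj_ofReal c)
  have hspec : spectrum ℂ ((c : ℂ) • (1 : Matrix n n ℂ)) = {(c : ℂ)} := by
    rw [← Algebra.algebraMap_eq_smul_one, spectrum.scalar_eq]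
  have h := hA.ofReal_eigenvalues_mem_spectrum i
  rw [hspec, Set.mem_singleton_iff] at h
  rw [evalsR_of_isHermitian hA]
  exact_mod_cast h

end Truncation

theorem nim_self (y : ℝ) : nim y y = y := by
  by_cases hy : y = 0 <;> simp [nim, hy]

theorem nim_of_lt_of_lt {y x : ℝ} {k : ℤ} (hy : 0 < y) (h₁ : y * k < x)
    (h₂ : x < y * (k + 1)) :
    nim y x = if x - y * k ≤ y * (k + 1) - x then y * k else y * (k + 1) := by
  have hfloor : ⌊x / y⌋ = k := by
    rw [Int.floor_eq_iff, le_div_iff₀ hy, div_lt_iff₀ hy]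
    constructor <;> linarith
  have hceil : ⌈x / y⌉ = k + 1 := by
    rw [Int.ceil_eq_iff, lt_div_iff₀ hy, div_le_iff₀ hy]
    push_cast
    constructor <;> linarith
  rw [nim, if_neg hy.ne', hfloor, hceil]
  push_cast
  rfl

-- `lam / 0 = 0` and `logb 2 0 = 0`, so the `η = 0` block of `MmeasA`, `MmeasB` always vanishes.
theorem Mterm_zero_zero (lam : ℝ) : Mterm 0 0 lam = 0 := by
  simp [Mterm]

theorem Mterm_self (η T : ℝ) : Mterm η T η = 0 := by
  simp [Mterm, nim_self]

theorem sqrt_two_lt_two : √2 < 2 := by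
  rw [Real.sqrt_lt' two_pos]; norm_num

theorem nim_half_two_sub_sqrt_two_div_four : nim (1 / 2) ((2 - √2) / 4) = 0 := by
  have := Real.one_lt_sqrt_two
  have := sqrt_two_lt_two
  rw [nim_of_lt_of_lt (k := 0) one_half_pos (by push_cast; linarith) (by push_cast; linarith),
    if_pos (by push_cast; linarith)]
  simp

theorem nim_half_two_add_sqrt_two_div_four : nim (1 / 2) ((2 + √2) / 4) = 1 := by
  have := Real.one_lt_sqrt_two
  have := sqrt_two_lt_two
  rw [nim_of_lt_of_lt (k := 1) one_half_pos (by push_cast; linarith) (by push_cast; linarith),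
    if_neg (by push_cast; linarith)]
  norm_num

section PartialTrace
variable {α β : Type*} [Fintype α] [Fintype β]

theorem ptraceA_sum {ι : Type*} (s : Finset ι) (ρ : ι → Matrix (α × β) (α × β) ℂ) :
    ptraceA (∑ i ∈ s, ρ i) = ∑ i ∈ s, ptraceA (ρ i) := by
  ext b b'
  simp only [ptraceA, Matrix.sum_apply]
  exact Finset.sum_comm

theorem ptraceA_smul (c : ℂ) (ρ : Matrix (α × β) (α × β) ℂ) :
    ptraceA (c • ρ) = c • ptraceA ρ := by
  ext b b'
  simp [ptraceA, Finset.mul_sum]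

theorem ptraceA_kronecker (X : Matrix α α ℂ) (Y : Matrix β β ℂ) :
    ptraceA (X ⊗ₖ Y) = X.trace • Y := by
  ext b b'
  simp [ptraceA, Matrix.trace, Finset.sum_mul]

theorem trace_ptraceA (ρ : Matrix (α × β) (α × β) ℂ) : (ptraceA ρ).trace = ρ.trace := by
  simp only [Matrix.trace, Matrix.diag, ptraceA, Fintype.sum_prod_type]
  exact Finset.sum_comm

theorem Matrix.IsHermitian.ptraceA {ρ : Matrix (α × β) (α × β) ℂ} (hρ : ρ.IsHermitian) :
    (ptraceA ρ).IsHermitian := by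
  ext b b'
  simp only [conjTranspose_apply, _root_.ptraceA, star_sum, hρ.apply]

def IsOrthonormalFamily {ι : Type*} [DecidableEq ι] (a : ι → α → ℂ) : Prop :=
  ∀ j j', ∑ i, star (a j i) * a j' i = if j = j' then 1 else 0

variable [DecidableEq α] [DecidableEq β] {a : α → α → ℂ} {b : β → β → ℂ}

theorem ne_zero_of_orthonormal
    (ha : IsOrthonormalFamily a) (j : α) : a j ≠ 0 := by
  intro h
  simpa [h] using ha j j

theorem vecMulVec_star_mulVec_of_orthonormal
    (ha : IsOrthonormalFamily a) (j j' : α) :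
    vecMulVec (a j) (star (a j)) *ᵥ a j' = (if j = j' then (1 : ℂ) else 0) • a j := by
  rw [vecMulVec_mulVec, op_smul_eq_smul, ← ha j j']
  rfl

theorem trace_vecMulVec_star_of_orthonormal
    (ha : IsOrthonormalFamily a) (j : α) :
    (vecMulVec (a j) (star (a j))).trace = 1 := by
  have h := ha j j
  rw [if_pos rfl] at h
  rw [trace_vecMulVec, dotProduct_comm, ← h]
  rfl

theorem mulVec_of_eq_sum_smul_kronecker
    (ha : IsOrthonormalFamily a)
    (hb : IsOrthonormalFamily b)
    {ρ : Matrix (α × β) (α × β) ℂ} {e : α → β → ℝ}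
    (hρ : ρ = ∑ j, ∑ k,
      (e j k : ℂ) • (vecMulVec (a j) (star (a j)) ⊗ₖ vecMulVec (b k) (star (b k))))
    (j : α) (k : β) :
    ρ *ᵥ (fun p => a j p.1 * b k p.2) = (e j k : ℂ) • fun p => a j p.1 * b k p.2 := by
  simp only [hρ, sum_mulVec, smul_mulVec, kronecker_mulVec_mul,
    vecMulVec_star_mulVec_of_orthonormal ha, vecMulVec_star_mulVec_of_orthonormal hb]
  ext p
  simp [Finset.sum_apply]

theorem ptraceA_mulVec_of_eq_sum_smul_kronecker
    (ha : IsOrthonormalFamily a)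
    (hb : IsOrthonormalFamily b)
    {ρ : Matrix (α × β) (α × β) ℂ} {e : α → β → ℝ}
    (hρ : ρ = ∑ j, ∑ k,
      (e j k : ℂ) • (vecMulVec (a j) (star (a j)) ⊗ₖ vecMulVec (b k) (star (b k))))
    (k : β) :
    ptraceA ρ *ᵥ b k = (∑ j, (e j k : ℂ)) • b k := by
  simp only [hρ, ptraceA_sum, ptraceA_smul, ptraceA_kronecker,
    trace_vecMulVec_star_of_orthonormal ha, one_smul, sum_mulVec, smul_mulVec,
    vecMulVec_star_mulVec_of_orthonormal hb]
  simp [ite_smul, Finset.sum_smul]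

end PartialTrace

section Measure
variable {α β : Type*} [Fintype α] [Fintype β] [DecidableEq α] [DecidableEq β]
  {ρ : Matrix (α × β) (α × β) ℂ} {η : ℝ}

theorem MmeasA_eq_of_mul_self_eq_smul (hρ : ρ.IsHermitian) (hsq : ρ * ρ = (η : ℂ) • ρ)
    (htr : ρ.trace = 1) : MmeasA ρ = ∑ i, Mterm η 1 (evalsR (ptraceB ρ) i) := by
  have h := hρ.eigenvalues_eq_zero_or_eq hsq
  have hT : η * dimEig ρ η = 1 := by exact_mod_cast (mul_dimEig_eq_trace hρ h).trans htr
  have hg : ∑ i, Mterm 0 (0 * dimEig ρ 0) (evalsR (ptraceB (trunc ρ 0)) i) = 0 := by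
    simp only [zero_mul, Mterm_zero_zero, sum_const_zero]
  rw [MmeasA, sum_image_evalsR_eq hρ h htr hg, trunc_eq_self hρ h, hT]

theorem MmeasB_eq_of_mul_self_eq_smul (hρ : ρ.IsHermitian) (hsq : ρ * ρ = (η : ℂ) • ρ)
    (htr : ρ.trace = 1) : MmeasB ρ = ∑ i, Mterm η 1 (evalsR (ptraceA ρ) i) := by
  have h := hρ.eigenvalues_eq_zero_or_eq hsq
  have hT : η * dimEig ρ η = 1 := by exact_mod_cast (mul_dimEig_eq_trace hρ h).trans htr
  have hg : ∑ i, Mterm 0 (0 * dimEig ρ 0) (evalsR (ptraceA (trunc ρ 0)) i) = 0 := by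
    simp only [zero_mul, Mterm_zero_zero, sum_const_zero]
  rw [MmeasB, sum_image_evalsR_eq hρ h htr hg, trunc_eq_self hρ h, hT]

end Measure

theorem varsigmaState_apply (p q : Fin 2 × Fin 2) :
    varsigmaState p q = (if p = (0, 0) ∧ q = (0, 0) then 1 / 2 else 0)
      + (if p.1 = 1 ∧ q.1 = 1 then 1 / 4 else 0) := by
  have h : ((√2 : ℝ) : ℂ)⁻¹ * ((√2 : ℝ) : ℂ)⁻¹ = 1 / 2 := by
    rw [← mul_inv, ← Complex.ofReal_mul, Real.mul_self_sqrt zero_le_two]; norm_num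
  obtain ⟨p₁, p₂⟩ := p
  obtain ⟨q₁, q₂⟩ := q
  fin_cases p₁ <;> fin_cases p₂ <;> fin_cases q₁ <;> fin_cases q₂ <;>
    simp [varsigmaState, ket00, ket1p, vecMulVec_apply, h] <;> norm_num

theorem varsigmaState_isHermitian : varsigmaState.IsHermitian := by
  ext p q
  simp only [conjTranspose_apply, varsigmaState_apply]
  split_ifs <;> simp_all

theorem varsigmaState_mul_self :
    varsigmaState * varsigmaState = ((1 / 2 : ℝ) : ℂ) • varsigmaState := by
  ext ⟨p₁, p₂⟩ ⟨q₁, q₂⟩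
  fin_cases p₁ <;> fin_cases p₂ <;> fin_cases q₁ <;> fin_cases q₂ <;>
    simp [Matrix.mul_apply, Fintype.sum_prod_type, varsigmaState_apply] <;> norm_num

theorem trace_varsigmaState : varsigmaState.trace = 1 := by
  simp [Matrix.trace, Fintype.sum_prod_type, varsigmaState_apply]
  norm_num

theorem ptraceB_varsigmaState : ptraceB varsigmaState = ((1 / 2 : ℝ) : ℂ) • 1 := by
  ext a a'
  fin_cases a <;> fin_cases a' <;> norm_num [ptraceB, varsigmaState_apply]

theorem ptraceA_varsigmaState : ptraceA varsigmaState = !![3 / 4, 1 / 4; 1 / 4, 1 / 4] := by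
  ext b b'
  fin_cases b <;> fin_cases b' <;> norm_num [ptraceA, varsigmaState_apply]

theorem spectrum_ptraceA_varsigmaState : spectrum ℂ (ptraceA varsigmaState) =
    {(((2 - √2) / 4 : ℝ) : ℂ), (((2 + √2) / 4 : ℝ) : ℂ)} := by
  have hs : ((√2 : ℝ) : ℂ) ^ 2 = 2 := by
    rw [← Complex.ofReal_pow, Real.sq_sqrt zero_le_two]; norm_num
  ext μ
  have hdet : (algebraMap ℂ _ μ - ptraceA varsigmaState).det
      = (μ - (((2 - √2) / 4 : ℝ) : ℂ)) * (μ - (((2 + √2) / 4 : ℝ) : ℂ)) := by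
    rw [ptraceA_varsigmaState, Matrix.det_fin_two]
    simp [Matrix.algebraMap_matrix_apply]
    linear_combination (1 / 16 : ℂ) * hs
  rw [spectrum.mem_iff, Matrix.isUnit_iff_isUnit_det, isUnit_iff_ne_zero, not_not, hdet,
    mul_eq_zero, sub_eq_zero, sub_eq_zero, Set.mem_insert_iff, Set.mem_singleton_iff]

theorem sum_evalsR_ptraceA_varsigmaState (f : ℝ → ℝ) :
    ∑ i, f (evalsR (ptraceA varsigmaState) i) = f ((2 - √2) / 4) + f ((2 + √2) / 4) := by
  have hB := varsigmaState_isHermitian.ptraceA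
  have hmem (i : Fin 2) :
      hB.eigenvalues i = (2 - √2) / 4 ∨ hB.eigenvalues i = (2 + √2) / 4 := by
    have := hB.ofReal_eigenvalues_mem_spectrum i
    rw [spectrum_ptraceA_varsigmaState] at this
    simpa only [Set.mem_insert_iff, Set.mem_singleton_iff, Complex.ofReal_inj] using this
  have hsum : hB.eigenvalues 0 + hB.eigenvalues 1 = 1 := by
    have := hB.trace_eq_sum_eigenvalues
    rw [trace_ptraceA, trace_varsigmaState, Fin.sum_univ_two,
      RCLike.ofReal_eq_complex_ofReal] at this
    exact_mod_cast this.symm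
  have := Real.one_lt_sqrt_two
  rw [evalsR_of_isHermitian hB, Fin.sum_univ_two]
  rcases hmem 0 with h₀ | h₀ <;> rcases hmem 1 with h₁ | h₁ <;> rw [h₀, h₁] at hsum ⊢
  · linarith
  · exact add_comm _ _
  · linarith

theorem MmeasA_varsigmaState : MmeasA varsigmaState = 0 := by
  rw [MmeasA_eq_of_mul_self_eq_smul varsigmaState_isHermitian varsigmaState_mul_self
    trace_varsigmaState, ptraceB_varsigmaState,
    Fintype.sum_congr _ _ fun i => by rw [evalsR_ofReal_smul_one], Mterm_self, sum_const_zero]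

theorem MmeasB_varsigmaState : MmeasB varsigmaState =
    -(((2 - √2) / 4 - 0) * Real.logb 2 ((2 - √2) / 4))
      - |(2 + √2) / 4 - 1| * Real.logb 2 ((2 + √2) / 4) := by
  rw [MmeasB_eq_of_mul_self_eq_smul varsigmaState_isHermitian varsigmaState_mul_self
    trace_varsigmaState, sum_evalsR_ptraceA_varsigmaState, Mterm, Mterm,
    nim_half_two_sub_sqrt_two_div_four, nim_half_two_add_sqrt_two_div_four, div_one, div_one,
    abs_of_nonneg (by linarith [sqrt_two_lt_two] : (0 : ℝ) ≤ (2 - √2) / 4 - 0)]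
  ring

theorem not_hasProductEigenbasis_varsigmaState : ¬ HasProductEigenbasis varsigmaState := by
  rintro ⟨a, b, e, ha, hb, hρ⟩
  have he (j k : Fin 2) : e j k = 0 ∨ e j k = 1 / 2 := by
    have := eq_zero_or_eq_of_mul_self_eq_smul varsigmaState_mul_self
      (mul_fst_snd_ne_zero (ne_zero_of_orthonormal ha j) (ne_zero_of_orthonormal hb k))
      (mulVec_of_eq_sum_smul_kronecker ha hb hρ j k)
    exact_mod_cast this
  have hs := mem_spectrum_of_mulVec_eq_smul (ne_zero_of_orthonormal hb 0)
    (ptraceA_mulVec_of_eq_sum_smul_kronecker ha hb hρ 0)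
  have hsum : e 0 0 + e 1 0 = (2 - √2) / 4 ∨ e 0 0 + e 1 0 = (2 + √2) / 4 := by
    rw [spectrum_ptraceA_varsigmaState, Fin.sum_univ_two, ← Complex.ofReal_add] at hs
    simpa only [Set.mem_insert_iff, Set.mem_singleton_iff, Complex.ofReal_inj] using hs
  have := Real.one_lt_sqrt_two
  have := sqrt_two_lt_two
  rcases he 0 0 with h₀ | h₀ <;> rcases he 1 0 with h₁ | h₁ <;> rcases hsum with h | h <;>
    linarith

theorem MmeasB_varsigmaState_pos : 0 < MmeasB varsigmaState := by
  have := Real.one_lt_sqrt_two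
  have := sqrt_two_lt_two
  have hl₁ : Real.logb 2 ((2 - √2) / 4) < 0 :=
    Real.logb_neg one_lt_two (by linarith) (by linarith)
  have hl₂ : Real.logb 2 ((2 + √2) / 4) < 0 :=
    Real.logb_neg one_lt_two (by linarith) (by linarith)
  have h₁ : 0 < -(((2 - √2) / 4 - 0) * Real.logb 2 ((2 - √2) / 4)) :=
    neg_pos.mpr (mul_neg_of_pos_of_neg (by linarith) hl₁)
  have h₂ : 0 ≤ |(2 + √2) / 4 - 1| * -Real.logb 2 ((2 + √2) / 4) :=
    mul_nonneg (abs_nonneg _) (neg_nonneg.mpr hl₂.le)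
  rw [MmeasB_varsigmaState]
  linarith

/-- ς has no product eigenbasis, `M^A(ς) = 0`, the eigenvalues of
`Tr_A ς` are `(2 ± √2)/4`, and `M^B(ς)` equals the stated value, so
`M(ς) = M^B(ς)/2 > 0`. -/
theorem varsigma_properties :
    ¬ HasProductEigenbasis varsigmaState ∧
    MmeasA varsigmaState = 0 ∧
    spectrum ℂ (ptraceA varsigmaState) =
      {(((2 - Real.sqrt 2) / 4 : ℝ) : ℂ), (((2 + Real.sqrt 2) / 4 : ℝ) : ℂ)} ∧
    MmeasB varsigmaState =
      -(((2 - Real.sqrt 2) / 4 - 0) * Real.logb 2 ((2 - Real.sqrt 2) / 4))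
      - |(2 + Real.sqrt 2) / 4 - 1| * Real.logb 2 ((2 + Real.sqrt 2) / 4) ∧
    Mmeas varsigmaState = MmeasB varsigmaState / 2 ∧
    0 < Mmeas varsigmaState := by
  have hM : Mmeas varsigmaState = MmeasB varsigmaState / 2 := by
    rw [Mmeas, MmeasA_varsigmaState, zero_add]
  refine ⟨not_hasProductEigenbasis_varsigmaState, MmeasA_varsigmaState,
    spectrum_ptraceA_varsigmaState, MmeasB_varsigmaState, hM, ?_⟩
  rw [hM]
  exact half_pos MmeasB_varsigmaState_pos
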